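/- Let n ≥ 1 be an integer. Then the Douglas–Rachford operator T satisfies ‖(T T*)^n − P_{Fix T}‖ = c_F^{2n}, where ‖·‖ is the operator norm and c_F is the cosine of the Friedrichs angle between U and V. -/

import Mathlib

/-!
Write `T = P_V P_U + P_{V⊥} P_{U⊥}`. Then `T T* = P_V P_U P_V + P_{V⊥} P_{U⊥} P_{V⊥}` and
`Fix T = (U ∩ V) ⊕ (U⊥ ∩ V⊥)`. Splitting `U = (U ∩ V) ⊕ M` and `V = (U ∩ V) ⊕ N` with
`M, N ⊥ U ∩ V` gives `P_V P_U P_V = P_{U ∩ V} + P_N P_M P_N`, and likewise for `U⊥, V⊥`, so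
`T T* − P_{Fix T}` is the sum of `P_N P_M P_N` and its analogue for the complements. The two
summands are supported on `V` and `V⊥`, so the norm is the larger of `‖P_M P_N‖² = c_F(U, V)²` and
`c_F(U⊥, V⊥)²`; these are equal, because `U + V` is dense in `(U⊥ ∩ V⊥)⊥` and the Friedrichs bound
`|⟨m, n⟩| ≤ c_F ‖m‖ ‖n‖` controls how much of a vector of `V⊥ ∩ (U⊥ ∩ V⊥)⊥` can lie in `U⊥`.
Finally `P_{Fix T}` is absorbed by `T T*` on both sides, so
`(T T*)ⁿ − P_{Fix T} = (T T* − P_{Fix T})ⁿ`, and a self-adjoint operator satisfies `‖Aⁿ‖ = ‖A‖ⁿ`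
by the C*-identity.
-/

noncomputable section

variable {X : Type*} [NormedAddCommGroup X] [InnerProductSpace ℝ X] [CompleteSpace X]

/-- The orthogonal projection onto a closed subspace `W`, as an operator on `X`. -/
noncomputable def proj (W : Submodule ℝ X) [W.HasOrthogonalProjection] : X →L[ℝ] X :=
  W.subtypeL.comp (W.orthogonalProjectionOnto)

instance infHOP (U V : Submodule ℝ X) [CompleteSpace U] [CompleteSpace V] :
    Submodule.HasOrthogonalProjection (U ⊓ V) := by
  have hU : IsClosed (U : Set X) := (completeSpace_coe_iff_isComplete.mp ‹_›).isClosed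
  have hV : IsClosed (V : Set X) := (completeSpace_coe_iff_isComplete.mp ‹_›).isClosed
  have : CompleteSpace (U ⊓ V : Submodule ℝ X) := (hU.inter hV).completeSpace_coe
  infer_instance

/-- The fixed point set `Fix T = {x | T x = x}` of a continuous linear operator `T`,
as a submodule of `X`. -/
noncomputable def fixedSpace (T : X →L[ℝ] X) : Submodule ℝ X := LinearMap.ker ((T - 1 : X →L[ℝ] X) : X →ₗ[ℝ] X)

instance fixedSpaceHOP (T : X →L[ℝ] X) : Submodule.HasOrthogonalProjection (fixedSpace T) := by
  have h : IsClosed ((fixedSpace T : Submodule ℝ X) : Set X) := by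
    have : ((fixedSpace T : Submodule ℝ X) : Set X) = {x | T x = x} := by
      ext x; simp [fixedSpace, LinearMap.mem_ker, sub_eq_zero]
    rw [this]
    exact isClosed_eq T.continuous continuous_id
  have : CompleteSpace (fixedSpace T) := h.completeSpace_coe
  infer_instance

/-- The reflector `R_W = 2 P_W − Id` associated with `W`. -/
noncomputable def reflector (W : Submodule ℝ X) [W.HasOrthogonalProjection] : X →L[ℝ] X :=
  2 • proj W - 1

/-- The Douglas–Rachford operator `T = T_{V,U} = P_V (2 P_U − Id) + Id − P_U`.
(The first argument is `U`, the second is `V`.) -/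
noncomputable def drOperator (U V : Submodule ℝ X) [U.HasOrthogonalProjection]
    [V.HasOrthogonalProjection] : X →L[ℝ] X :=
  proj V * (2 • proj U - 1) + 1 - proj U

/-- The cosine of the Friedrichs angle between `U` and `V`. -/
noncomputable def friedrichs (U V : Submodule ℝ X) : ℝ :=
  sSup {c : ℝ | ∃ u v : X, u ∈ U ⊓ (U ⊓ V)ᗮ ∧ v ∈ V ⊓ (U ⊓ V)ᗮ ∧
    ‖u‖ ≤ 1 ∧ ‖v‖ ≤ 1 ∧ c = inner ℝ u v}


section Ring

variable {R : Type*} [Ring R]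

theorem IsIdempotentElem.add_pow_of_mul_eq_zero {p e : R} (hp : IsIdempotentElem p)
    (hpe : p * e = 0) (hep : e * p = 0) {n : ℕ} (hn : n ≠ 0) : (p + e) ^ n = p + e ^ n := by
  induction n, Nat.one_le_iff_ne_zero.mpr hn using Nat.le_induction with
  | base => simp
  | succ k hk ih =>
    obtain ⟨j, rfl⟩ := Nat.exists_eq_add_of_le' hk
    rw [pow_succ, ih (by omega), add_mul, mul_add, mul_add, hp.eq, hpe, pow_succ e (j + 1),
      pow_succ e j, mul_assoc _ e p, hep, mul_zero, add_zero, zero_add]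

theorem IsIdempotentElem.add_mul_add_mul_add_of_mul_eq_zero {c m n : R} (hc : IsIdempotentElem c)
    (hcm : c * m = 0) (hmc : m * c = 0) (hcn : c * n = 0) (hnc : n * c = 0) :
    (c + n) * (c + m) * (c + n) = c + n * m * n := by
  have h : (c + n) * (c + m) = c + n * m := by
    rw [add_mul, mul_add, mul_add, hc.eq, hcm, hnc]; abel
  rw [h, add_mul, mul_add, mul_add, hc.eq, hcn, mul_assoc n m c, hmc, mul_zero]; abel

end Ring

theorem IsSelfAdjoint.norm_pow {A : Type*} [NormedRing A] [StarRing A] [CStarRing A] {a : A}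
    (ha : IsSelfAdjoint a) {n : ℕ} (hn : n ≠ 0) : ‖a ^ n‖ = ‖a‖ ^ n := by
  refine le_antisymm (norm_pow_le' a (Nat.pos_of_ne_zero hn)) ?_
  rcases (norm_nonneg a).eq_or_lt with h0 | hpos
  · rw [← h0, zero_pow hn]; exact norm_nonneg _
  have hlt : n < 2 ^ n := Nat.lt_two_pow_self
  have key : ‖a‖ ^ n * ‖a‖ ^ (2 ^ n - n) ≤ ‖a ^ n‖ * ‖a‖ ^ (2 ^ n - n) :=
    calc ‖a‖ ^ n * ‖a‖ ^ (2 ^ n - n) = ‖a ^ 2 ^ n‖ := by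
          rw [← pow_add, Nat.add_sub_cancel' hlt.le, ha.norm_pow_two_pow]
      _ = ‖a ^ n * a ^ (2 ^ n - n)‖ := by rw [← pow_add, Nat.add_sub_cancel' hlt.le]
      _ ≤ ‖a ^ n‖ * ‖a‖ ^ (2 ^ n - n) :=
          (norm_mul_le _ _).trans (by gcongr; exact norm_pow_le' a (by omega))
  exact le_of_mul_le_mul_right key (pow_pos hpos _)

namespace Submodule

section RCLike

variable {𝕜 E : Type*} [RCLike 𝕜] [NormedAddCommGroup E] [InnerProductSpace 𝕜 E]
  {K L : Submodule 𝕜 E} [K.HasOrthogonalProjection] [L.HasOrthogonalProjection]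

theorem starProjection_mul_starProjection_of_le (h : K ≤ L) :
    K.starProjection * L.starProjection = K.starProjection :=
  starProjection_comp_starProjection_of_le h

theorem starProjection_mul_starProjection_of_le' (h : K ≤ L) :
    L.starProjection * K.starProjection = K.starProjection := by
  ext x
  exact starProjection_eq_self_iff.mpr (h (K.starProjection_apply_mem x))

theorem IsOrtho.starProjection_mul_starProjection (h : K ⟂ L) :
    K.starProjection * L.starProjection = 0 :=
  h.starProjection_comp_starProjection

theorem starProjection_inf_orthogonal (h : K ≤ L) [(L ⊓ Kᗮ).HasOrthogonalProjection] :
    (L ⊓ Kᗮ).starProjection = L.starProjection - K.starProjection := by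
  ext x
  rw [sub_apply]
  refine eq_starProjection_of_mem_orthogonal (mem_inf.mpr ⟨?_, ?_⟩) ?_
  · exact sub_mem (L.starProjection_apply_mem x) (h (K.starProjection_apply_mem x))
  · rw [← starProjection_comp_starProjection_of_le h]
    exact sub_starProjection_mem_orthogonal _
  · rw [sub_sub_eq_add_sub, add_sub_right_comm]
    exact add_mem (orthogonal_le inf_le_left (sub_starProjection_mem_orthogonal x))
      (orthogonal_le inf_le_right (K.le_orthogonal_orthogonal (K.starProjection_apply_mem x)))

theorem starProjection_sup_of_isOrtho (h : K ⟂ L) [(K ⊔ L).HasOrthogonalProjection] :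
    (K ⊔ L).starProjection = K.starProjection + L.starProjection := by
  ext x
  rw [add_apply]
  refine eq_starProjection_of_mem_orthogonal
    (add_mem_sup (K.starProjection_apply_mem x) (L.starProjection_apply_mem x)) ?_
  rw [← inf_orthogonal]
  constructor
  · rw [sub_add_eq_sub_sub]
    exact sub_mem (sub_starProjection_mem_orthogonal x) (h.symm (L.starProjection_apply_mem x))
  · rw [sub_add_eq_sub_sub_swap]
    exact sub_mem (sub_starProjection_mem_orthogonal x) (h (K.starProjection_apply_mem x))

theorem starProjection_mul_mul_starProjection_of_le (h : K ≤ L) (A : E →L[𝕜] E) :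
    L.starProjection * (K.starProjection * A * K.starProjection) * L.starProjection =
      K.starProjection * A * K.starProjection := by
  rw [mul_assoc, mul_assoc _ K.starProjection, starProjection_mul_starProjection_of_le h,
    ← mul_assoc, ← mul_assoc, starProjection_mul_starProjection_of_le' h]

theorem IsOrtho.mul_starProjection_mul_starProjection (h : K ⟂ L) (A : E →L[𝕜] E) :
    A * K.starProjection * L.starProjection = 0 := by
  rw [mul_assoc, h.starProjection_mul_starProjection, mul_zero]

theorem norm_add_eq_max_of_corners {S T : E →L[𝕜] E}
    (hS : K.starProjection * S * K.starProjection = S)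
    (hT : Kᗮ.starProjection * T * Kᗮ.starProjection = T) : ‖S + T‖ = max ‖S‖ ‖T‖ := by
  have hKS : K.starProjection * S = S := by
    rw [← hS, ← mul_assoc, ← mul_assoc, K.isIdempotentElem_starProjection.eq]
  have hSK : S * K.starProjection = S := by
    rw [← hS, mul_assoc, K.isIdempotentElem_starProjection.eq]
  have hKT : Kᗮ.starProjection * T = T := by
    rw [← hT, ← mul_assoc, ← mul_assoc, Kᗮ.isIdempotentElem_starProjection.eq]
  have hTK : T * Kᗮ.starProjection = T := by
    rw [← hT, mul_assoc, Kᗮ.isIdempotentElem_starProjection.eq]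
  refine le_antisymm ?_ (max_le ?_ ?_)
  · set m := max ‖S‖ ‖T‖
    refine ContinuousLinearMap.opNorm_le_bound _ (le_max_of_le_left (norm_nonneg _)) fun x ↦ ?_
    have hSx : ‖S x‖ ≤ m * ‖K.starProjection x‖ := by
      conv_lhs => rw [← hSK]
      exact (S.le_opNorm _).trans (by gcongr; exacts [le_max_left _ _, le_rfl])
    have hTx : ‖T x‖ ≤ m * ‖Kᗮ.starProjection x‖ := by
      conv_lhs => rw [← hTK]
      exact (T.le_opNorm _).trans (by gcongr; exacts [le_max_right _ _, le_rfl])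
    have hpyth : ‖S x + T x‖ * ‖S x + T x‖ = ‖S x‖ * ‖S x‖ + ‖T x‖ * ‖T x‖ := by
      refine norm_add_sq_eq_norm_sq_add_norm_sq_of_inner_eq_zero (𝕜 := 𝕜) _ _ ?_
      rw [← hKS, ← hKT]
      exact inner_right_of_mem_orthogonal (K.starProjection_apply_mem _)
        (Kᗮ.starProjection_apply_mem _)
    have hx := norm_sq_eq_add_norm_sq_starProjection x K
    rw [add_apply, ← sq_le_sq₀ (norm_nonneg _) (by positivity)]
    nlinarith [mul_self_le_mul_self (norm_nonneg _) hSx, mul_self_le_mul_self (norm_nonneg _) hTx,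
      congrArg (m ^ 2 * ·) hx]
  · calc ‖S‖ = ‖K.starProjection * (S + T)‖ := by
          rw [mul_add, hKS, ← hKT, ← mul_assoc,
            (isOrtho_orthogonal_right K).starProjection_mul_starProjection, zero_mul, add_zero]
      _ ≤ ‖S + T‖ := (norm_mul_le _ _).trans
          (mul_le_of_le_one_left (norm_nonneg _) K.starProjection_norm_le)
  · calc ‖T‖ = ‖Kᗮ.starProjection * (S + T)‖ := by
          rw [mul_add, hKT, ← hKS, ← mul_assoc,
            (isOrtho_orthogonal_right K).symm.starProjection_mul_starProjection, zero_mul, zero_add]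
      _ ≤ ‖S + T‖ := (norm_mul_le _ _).trans
          (mul_le_of_le_one_left (norm_nonneg _) Kᗮ.starProjection_norm_le)

theorem inner_starProjection_mul_starProjection_apply {u v : E} (hu : u ∈ K) (hv : v ∈ L) :
    inner 𝕜 u ((K.starProjection * L.starProjection) v) = inner 𝕜 u v := by
  rw [mul_apply_eq_comp, starProjection_eq_self_iff.mpr hv,
    ← inner_starProjection_left_eq_right, starProjection_eq_self_iff.mpr hu]

theorem norm_inner_le_norm_starProjection_mul_mul {u v : E} (hu : u ∈ K) (hv : v ∈ L) :
    ‖inner 𝕜 u v‖ ≤ ‖K.starProjection * L.starProjection‖ * (‖u‖ * ‖v‖) := by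
  rw [← inner_starProjection_mul_starProjection_apply hu hv, mul_left_comm]
  exact (norm_inner_le_norm _ _).trans (by gcongr; exact ContinuousLinearMap.le_opNorm _ _)

theorem norm_starProjection_mul_mul_starProjection [CompleteSpace E] :
    ‖L.starProjection * K.starProjection * L.starProjection‖ =
      ‖K.starProjection * L.starProjection‖ ^ 2 := by
  have h : L.starProjection * K.starProjection * L.starProjection =
      star (K.starProjection * L.starProjection) * (K.starProjection * L.starProjection) := by
    rw [star_mul, (isSelfAdjoint_starProjection K).star_eq,
      (isSelfAdjoint_starProjection L).star_eq, mul_assoc, mul_assoc,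
      ← mul_assoc K.starProjection, K.isIdempotentElem_starProjection.eq]
  rw [h, sq]
  exact CStarRing.norm_star_mul_self

end RCLike

section Real

variable {F : Type*} [NormedAddCommGroup F] [InnerProductSpace ℝ F]
  {K L : Submodule ℝ F} [K.HasOrthogonalProjection] [L.HasOrthogonalProjection]

theorem sSup_inner_eq_norm_starProjection_mul :
    sSup {c : ℝ | ∃ u v : F, u ∈ K ∧ v ∈ L ∧ ‖u‖ ≤ 1 ∧ ‖v‖ ≤ 1 ∧ c = inner ℝ u v} =
      ‖K.starProjection * L.starProjection‖ := by
  set S := {c : ℝ | ∃ u v : F, u ∈ K ∧ v ∈ L ∧ ‖u‖ ≤ 1 ∧ ‖v‖ ≤ 1 ∧ c = inner ℝ u v}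
  have hzero : (0 : ℝ) ∈ S := ⟨0, 0, K.zero_mem, L.zero_mem, by simp, by simp, by simp⟩
  have hbound : ∀ c ∈ S, c ≤ ‖K.starProjection * L.starProjection‖ := by
    rintro _ ⟨u, v, hu, hv, hu1, hv1, rfl⟩
    calc inner ℝ u v ≤ ‖K.starProjection * L.starProjection‖ * (‖u‖ * ‖v‖) :=
          (Real.le_norm_self _).trans (norm_inner_le_norm_starProjection_mul_mul hu hv)
      _ ≤ ‖K.starProjection * L.starProjection‖ := by
          apply mul_le_of_le_one_right (norm_nonneg _)
          exact mul_le_one₀ hu1 (norm_nonneg v) hv1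
  refine le_antisymm (csSup_le ⟨0, hzero⟩ hbound) ?_
  refine ContinuousLinearMap.opNorm_le_of_re_inner_le (le_csSup ⟨_, hbound⟩ hzero)
    fun x y hx hy ↦ le_csSup ⟨_, hbound⟩ ⟨K.starProjection y, L.starProjection x,
      K.starProjection_apply_mem y, L.starProjection_apply_mem x,
      hy ▸ norm_starProjection_apply_le K y, hx ▸ norm_starProjection_apply_le L x, ?_⟩
  rw [RCLike.re_to_real, mul_apply_eq_comp, inner_starProjection_left_eq_right,
    real_inner_comm]

theorem one_sub_sq_mul_sq_le_sq_norm_add {u v : F} (hu : u ∈ K) (hv : v ∈ L) :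
    (1 - ‖K.starProjection * L.starProjection‖ ^ 2) * ‖u‖ ^ 2 ≤ ‖u + v‖ ^ 2 := by
  have h := norm_inner_le_norm_starProjection_mul_mul (𝕜 := ℝ) hu hv
  rw [Real.norm_eq_abs] at h
  rw [norm_add_sq_real]
  nlinarith [neg_abs_le (inner ℝ u v),
    sq_nonneg (‖v‖ - ‖K.starProjection * L.starProjection‖ * ‖u‖)]

end Real

instance completeSpace_inf_orthogonal {𝕜 E : Type*} [RCLike 𝕜] [NormedAddCommGroup E]
    [InnerProductSpace 𝕜 E] [CompleteSpace E] (U W : Submodule 𝕜 E) [CompleteSpace U] :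
    CompleteSpace (U ⊓ Wᗮ : Submodule 𝕜 E) :=
  ((completeSpace_coe_iff_isComplete.mp ‹_›).isClosed.inter W.isClosed_orthogonal).completeSpace_coe

end Submodule

open Submodule

section Friedrichs

variable (U V : Submodule ℝ X) [CompleteSpace U] [CompleteSpace V]

theorem friedrichs_eq_norm : friedrichs U V =
    ‖(U ⊓ (U ⊓ V)ᗮ).starProjection * (V ⊓ (U ⊓ V)ᗮ).starProjection‖ :=
  sSup_inner_eq_norm_starProjection_mul

theorem friedrichs_nonneg : 0 ≤ friedrichs U V :=
  friedrichs_eq_norm U V ▸ norm_nonneg _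

theorem friedrichs_le_one : friedrichs U V ≤ 1 :=
  friedrichs_eq_norm U V ▸ (norm_mul_le _ _).trans
    (mul_le_one₀ (starProjection_norm_le _) (norm_nonneg _) (starProjection_norm_le _))

variable {U V}

theorem one_sub_friedrichs_sq_mul_sq_inner_le {x z : X} (hx : x ∈ Vᗮ) (hz : z ∈ U ⊔ V) :
    (1 - friedrichs U V ^ 2) * inner ℝ x z ^ 2 ≤ ‖U.starProjection x‖ ^ 2 * ‖z‖ ^ 2 := by
  -- only the component of `u` in `U ⊓ (U ⊓ V)ᗮ` pairs with `x`, and the Friedrichs bound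
  -- controls its norm by `‖u + v‖`
  obtain ⟨u, hu, v, hv, rfl⟩ := mem_sup.mp hz
  set C := U ⊓ V
  have hxC : x ∈ Cᗮ := orthogonal_le inf_le_right hx
  have huC : Cᗮ.starProjection u ∈ U ⊓ Cᗮ := by
    refine ⟨?_, Cᗮ.starProjection_apply_mem u⟩
    rw [starProjection_orthogonal_val]
    exact sub_mem hu (C.starProjection_apply_mem u).1
  have hvC : Cᗮ.starProjection v ∈ V ⊓ Cᗮ := by
    refine ⟨?_, Cᗮ.starProjection_apply_mem v⟩
    rw [starProjection_orthogonal_val]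
    exact sub_mem hv (C.starProjection_apply_mem v).2
  have hinner : inner ℝ x (u + v) = inner ℝ (U.starProjection x) (Cᗮ.starProjection u) := by
    rw [inner_add_right, inner_left_of_mem_orthogonal hv hx, add_zero,
      inner_starProjection_left_eq_right, starProjection_eq_self_iff.mpr huC.1,
      ← inner_starProjection_left_eq_right, starProjection_eq_self_iff.mpr hxC]
  have hcs : inner ℝ x (u + v) ^ 2 ≤ ‖U.starProjection x‖ ^ 2 * ‖Cᗮ.starProjection u‖ ^ 2 := by
    rw [hinner, ← mul_pow, ← sq_abs]
    exact pow_le_pow_left₀ (abs_nonneg _) (abs_real_inner_le_norm _ _) 2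
  have hnorm : (1 - friedrichs U V ^ 2) * ‖Cᗮ.starProjection u‖ ^ 2 ≤ ‖u + v‖ ^ 2 :=
    calc (1 - friedrichs U V ^ 2) * ‖Cᗮ.starProjection u‖ ^ 2
        ≤ ‖Cᗮ.starProjection u + Cᗮ.starProjection v‖ ^ 2 := by
          rw [friedrichs_eq_norm]; exact one_sub_sq_mul_sq_le_sq_norm_add huC hvC
      _ ≤ ‖u + v‖ ^ 2 := by
          rw [← map_add]; gcongr; exact norm_starProjection_apply_le _ _
  have hc : 0 ≤ 1 - friedrichs U V ^ 2 := by
    nlinarith [friedrichs_nonneg U V, friedrichs_le_one U V]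
  nlinarith [mul_le_mul_of_nonneg_left hcs hc, sq_nonneg ‖U.starProjection x‖]

theorem norm_starProjection_orthogonal_le_friedrichs_mul {x : X} (hx : x ∈ Vᗮ ⊓ (Uᗮ ⊓ Vᗮ)ᗮ) :
    ‖Uᗮ.starProjection x‖ ≤ friedrichs U V * ‖x‖ := by
  have hcl : x ∈ closure ((U ⊔ V : Submodule ℝ X) : Set X) := by
    rw [← topologicalClosure_coe, ← orthogonal_orthogonal_eq_closure, ← inf_orthogonal]
    exact hx.2
  have key := closure_minimal (t := {z : X |
      (1 - friedrichs U V ^ 2) * inner ℝ x z ^ 2 ≤ ‖U.starProjection x‖ ^ 2 * ‖z‖ ^ 2})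
    (fun z hz ↦ by exact one_sub_friedrichs_sq_mul_sq_inner_le hx.1 hz)
    (isClosed_le (by fun_prop) (by fun_prop)) hcl
  rw [Set.mem_ofPred_eq, real_inner_self_eq_norm_sq] at key
  rw [← sq_le_sq₀ (norm_nonneg _) (mul_nonneg (friedrichs_nonneg U V) (norm_nonneg _))]
  rcases eq_or_ne x 0 with rfl | hx0
  · simp
  have hU : (1 - friedrichs U V ^ 2) * ‖x‖ ^ 2 ≤ ‖U.starProjection x‖ ^ 2 :=
    le_of_mul_le_mul_right (by nlinarith [key]) (by positivity : 0 < ‖x‖ ^ 2)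
  nlinarith [norm_sq_eq_add_norm_sq_starProjection x U]

variable (U V)

theorem friedrichs_orthogonal_le : friedrichs Uᗮ Vᗮ ≤ friedrichs U V := by
  rw [friedrichs_eq_norm Uᗮ Vᗮ]
  set M := Uᗮ ⊓ (Uᗮ ⊓ Vᗮ)ᗮ
  set N := Vᗮ ⊓ (Uᗮ ⊓ Vᗮ)ᗮ
  calc ‖M.starProjection * N.starProjection‖
      = ‖M.starProjection * (Uᗮ.starProjection * N.starProjection)‖ := by
        rw [← mul_assoc, starProjection_mul_starProjection_of_le inf_le_left]
    _ ≤ ‖Uᗮ.starProjection * N.starProjection‖ :=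
        (norm_mul_le _ _).trans (mul_le_of_le_one_left (norm_nonneg _) (starProjection_norm_le _))
    _ ≤ friedrichs U V := by
        refine ContinuousLinearMap.opNorm_le_bound _ (friedrichs_nonneg U V) fun x ↦ ?_
        refine (norm_starProjection_orthogonal_le_friedrichs_mul
          (N.starProjection_apply_mem x)).trans ?_
        gcongr
        exacts [friedrichs_nonneg U V, norm_starProjection_apply_le N x]

theorem friedrichs_orthogonal : friedrichs Uᗮ Vᗮ = friedrichs U V := by
  refine le_antisymm (friedrichs_orthogonal_le U V) ?_
  simpa only [orthogonal_orthogonal] using friedrichs_orthogonal_le Uᗮ Vᗮ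

end Friedrichs

section DouglasRachford

variable {E : Type*} [NormedAddCommGroup E] [InnerProductSpace ℝ E]

theorem proj_eq_starProjection (W : Submodule ℝ E) [W.HasOrthogonalProjection] :
    proj W = W.starProjection := rfl

theorem mem_fixedSpace_iff {T : E →L[ℝ] E} {x : E} : x ∈ fixedSpace T ↔ T x = x := by
  simp [fixedSpace, sub_eq_zero]

variable (U V : Submodule ℝ E) [U.HasOrthogonalProjection] [V.HasOrthogonalProjection]

theorem drOperator_eq :
    drOperator U V =
      V.starProjection * U.starProjection + Vᗮ.starProjection * Uᗮ.starProjection := by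
  rw [drOperator, proj_eq_starProjection, proj_eq_starProjection, starProjection_orthogonal',
    starProjection_orthogonal']
  noncomm_ring

theorem starProjection_mul_drOperator :
    V.starProjection * drOperator U V = V.starProjection * U.starProjection := by
  rw [drOperator_eq, mul_add, ← mul_assoc, ← mul_assoc, V.isIdempotentElem_starProjection.eq,
    (isOrtho_orthogonal_right V).starProjection_mul_starProjection, zero_mul, add_zero]

theorem starProjection_orthogonal_mul_drOperator :
    Vᗮ.starProjection * drOperator U V = Vᗮ.starProjection * Uᗮ.starProjection := by
  rw [drOperator_eq, mul_add, ← mul_assoc, ← mul_assoc, Vᗮ.isIdempotentElem_starProjection.eq,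
    (isOrtho_orthogonal_right V).symm.starProjection_mul_starProjection, zero_mul, zero_add]

theorem drOperator_mul_adjoint [CompleteSpace E] :
    drOperator U V * (drOperator U V).adjoint =
      V.starProjection * U.starProjection * V.starProjection +
        Vᗮ.starProjection * Uᗮ.starProjection * Vᗮ.starProjection := by
  have hU : ∀ A, U.starProjection * (U.starProjection * A) = U.starProjection * A := fun A ↦ by
    rw [← mul_assoc, U.isIdempotentElem_starProjection.eq]
  have hU' : ∀ A, Uᗮ.starProjection * (Uᗮ.starProjection * A) = Uᗮ.starProjection * A :=
    fun A ↦ by rw [← mul_assoc, Uᗮ.isIdempotentElem_starProjection.eq]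
  have hUU' : ∀ A, U.starProjection * (Uᗮ.starProjection * A) = 0 := fun A ↦ by
    rw [← mul_assoc, (isOrtho_orthogonal_right U).starProjection_mul_starProjection, zero_mul]
  have hU'U : ∀ A, Uᗮ.starProjection * (U.starProjection * A) = 0 := fun A ↦ by
    rw [← mul_assoc, (isOrtho_orthogonal_right U).symm.starProjection_mul_starProjection,
      zero_mul]
  rw [← ContinuousLinearMap.star_eq_adjoint, drOperator_eq]
  simp only [star_add, star_mul, (isSelfAdjoint_starProjection _).star_eq, add_mul, mul_add,
    mul_assoc, hU, hU', hUU', hU'U, mul_zero, add_zero, zero_add]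

theorem fixedSpace_drOperator : fixedSpace (drOperator U V) = U ⊓ V ⊔ Uᗮ ⊓ Vᗮ := by
  refine le_antisymm (fun x hx ↦ ?_) (sup_le (fun x hx ↦ ?_) (fun x hx ↦ ?_)) <;>
    rw [mem_fixedSpace_iff] at *
  · have hV : V.starProjection (Uᗮ.starProjection x) = 0 := by
      rw [starProjection_orthogonal_val, map_sub,
        ← mul_apply_eq_comp V.starProjection U.starProjection,
        ← starProjection_mul_drOperator, mul_apply_eq_comp, hx, sub_self]
    have hV' : Vᗮ.starProjection (U.starProjection x) = 0 := by
      rw [eq_sub_of_add_eq (starProjection_add_starProjection_orthogonal (K := U) x), map_sub, ← mul_apply_eq_comp Vᗮ.starProjection Uᗮ.starProjection,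
        ← starProjection_orthogonal_mul_drOperator, mul_apply_eq_comp, hx, sub_self]
    rw [← starProjection_add_starProjection_orthogonal (K := U) x]
    refine add_mem_sup ⟨U.starProjection_apply_mem x, ?_⟩
      ⟨Uᗮ.starProjection_apply_mem x, (starProjection_apply_eq_zero_iff _).mp hV⟩
    rw [← V.orthogonal_orthogonal]
    exact (starProjection_apply_eq_zero_iff _).mp hV'
  · rw [drOperator_eq, add_apply, mul_apply_eq_comp, mul_apply_eq_comp,
      starProjection_eq_self_iff.mpr hx.1, starProjection_eq_self_iff.mpr hx.2,
      starProjection_orthogonal_apply_eq_zero hx.1, map_zero, add_zero]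
  · rw [drOperator_eq, add_apply, mul_apply_eq_comp, mul_apply_eq_comp,
      starProjection_eq_self_iff.mpr hx.1, starProjection_eq_self_iff.mpr hx.2,
      (starProjection_apply_eq_zero_iff _).mpr hx.1, map_zero, zero_add]

end DouglasRachford

section

variable (U V : Submodule ℝ X) [CompleteSpace U] [CompleteSpace V]

theorem proj_fixedSpace_drOperator :
    proj (fixedSpace (drOperator U V)) = (U ⊓ V).starProjection + (Uᗮ ⊓ Vᗮ).starProjection := by
  have h := fixedSpace_drOperator U V
  have : (U ⊓ V ⊔ Uᗮ ⊓ Vᗮ).HasOrthogonalProjection := h ▸ inferInstance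
  rw [← starProjection_sup_of_isOrtho ((isOrtho_orthogonal_right U).mono inf_le_left inf_le_left),
    proj_eq_starProjection]
  -- the two sides differ only in their `HasOrthogonalProjection` instances
  congr 1

theorem starProjection_mul_mul_starProjection_eq_inf_add :
    V.starProjection * U.starProjection * V.starProjection =
      (U ⊓ V).starProjection + (V ⊓ (U ⊓ V)ᗮ).starProjection *
        (U ⊓ (U ⊓ V)ᗮ).starProjection * (V ⊓ (U ⊓ V)ᗮ).starProjection := by
  set C := U ⊓ V
  have hU : U.starProjection = C.starProjection + (U ⊓ Cᗮ).starProjection := by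
    rw [starProjection_inf_orthogonal inf_le_left, add_sub_cancel]
  have hV : V.starProjection = C.starProjection + (V ⊓ Cᗮ).starProjection := by
    rw [starProjection_inf_orthogonal inf_le_right, add_sub_cancel]
  have hM : U ⊓ Cᗮ ⟂ C := inf_le_right
  have hN : V ⊓ Cᗮ ⟂ C := inf_le_right
  rw [hU, hV]
  exact C.isIdempotentElem_starProjection.add_mul_add_mul_add_of_mul_eq_zero
    hM.symm.starProjection_mul_starProjection hM.starProjection_mul_starProjection
    hN.symm.starProjection_mul_starProjection hN.starProjection_mul_starProjection

theorem drOperator_mul_adjoint_sub_proj_fixedSpace :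
    drOperator U V * (drOperator U V).adjoint - proj (fixedSpace (drOperator U V)) =
      (V ⊓ (U ⊓ V)ᗮ).starProjection * (U ⊓ (U ⊓ V)ᗮ).starProjection *
          (V ⊓ (U ⊓ V)ᗮ).starProjection +
        (Vᗮ ⊓ (Uᗮ ⊓ Vᗮ)ᗮ).starProjection * (Uᗮ ⊓ (Uᗮ ⊓ Vᗮ)ᗮ).starProjection *
          (Vᗮ ⊓ (Uᗮ ⊓ Vᗮ)ᗮ).starProjection := by
  rw [drOperator_mul_adjoint, proj_fixedSpace_drOperator,
    starProjection_mul_mul_starProjection_eq_inf_add U V,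
    starProjection_mul_mul_starProjection_eq_inf_add Uᗮ Vᗮ]
  abel

theorem isSelfAdjoint_drOperator_mul_adjoint_sub_proj_fixedSpace :
    IsSelfAdjoint
      (drOperator U V * (drOperator U V).adjoint - proj (fixedSpace (drOperator U V))) := by
  rw [← ContinuousLinearMap.star_eq_adjoint]
  exact (IsSelfAdjoint.mul_star_self _).sub (isSelfAdjoint_starProjection _)

theorem norm_drOperator_mul_adjoint_sub_proj_fixedSpace :
    ‖drOperator U V * (drOperator U V).adjoint - proj (fixedSpace (drOperator U V))‖ =
      friedrichs U V ^ 2 := by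
  rw [drOperator_mul_adjoint_sub_proj_fixedSpace,
    norm_add_eq_max_of_corners (starProjection_mul_mul_starProjection_of_le inf_le_left _)
      (starProjection_mul_mul_starProjection_of_le inf_le_left _),
    norm_starProjection_mul_mul_starProjection, norm_starProjection_mul_mul_starProjection,
    ← friedrichs_eq_norm, ← friedrichs_eq_norm, friedrichs_orthogonal, max_self]

theorem drOperator_mul_adjoint_pow_sub_proj_fixedSpace {n : ℕ} (hn : n ≠ 0) :
    (drOperator U V * (drOperator U V).adjoint) ^ n - proj (fixedSpace (drOperator U V)) =
      (drOperator U V * (drOperator U V).adjoint - proj (fixedSpace (drOperator U V))) ^ n := by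
  set P := proj (fixedSpace (drOperator U V)) with hP
  set E := drOperator U V * (drOperator U V).adjoint - P with hE
  have hPsa : IsSelfAdjoint P := isSelfAdjoint_starProjection _
  have hPP : IsIdempotentElem P := isIdempotentElem_starProjection _
  have hEsa : IsSelfAdjoint E := isSelfAdjoint_drOperator_mul_adjoint_sub_proj_fixedSpace U V
  have hEP : E * P = 0 := by
    -- `V ⊓ (U ⊓ V)ᗮ` and `Vᗮ ⊓ (Uᗮ ⊓ Vᗮ)ᗮ` are both orthogonal to `U ⊓ V` and to `Uᗮ ⊓ Vᗮ`
    have hC : U ⊓ V ≤ V := inf_le_right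
    have hD : Uᗮ ⊓ Vᗮ ≤ Vᗮ := inf_le_right
    rw [hE, hP, drOperator_mul_adjoint_sub_proj_fixedSpace, proj_fixedSpace_drOperator, add_mul,
      mul_add, mul_add,
      IsOrtho.mul_starProjection_mul_starProjection inf_le_right,
      ((isOrtho_orthogonal_right V).mono inf_le_left hD).mul_starProjection_mul_starProjection,
      ((isOrtho_orthogonal_right V).symm.mono inf_le_left hC).mul_starProjection_mul_starProjection,
      IsOrtho.mul_starProjection_mul_starProjection inf_le_right, add_zero, add_zero]
  have hPE : P * E = 0 := by
    simpa [hPsa.star_eq, hEsa.star_eq] using congrArg star hEP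
  rw [← add_sub_cancel P (drOperator U V * (drOperator U V).adjoint), ← hE,
    hPP.add_pow_of_mul_eq_zero hPE hEP hn, add_sub_cancel_left]

end

/-- `‖(T T*)^n − P_{Fix T}‖ = c_F^{2n}` for every integer `n ≥ 1`. -/
theorem norm_drOperator_mul_adjoint_pow_sub_proj_fixedSpace
    (U V : Submodule ℝ X) [CompleteSpace U] [CompleteSpace V] (n : ℕ) (hn : 1 ≤ n) :
    ‖(drOperator U V * ContinuousLinearMap.adjoint (drOperator U V)) ^ n -
        proj (fixedSpace (drOperator U V))‖ = friedrichs U V ^ (2 * n) := by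
  have hn₀ : n ≠ 0 := Nat.one_le_iff_ne_zero.mp hn
  rw [drOperator_mul_adjoint_pow_sub_proj_fixedSpace U V hn₀,
    (isSelfAdjoint_drOperator_mul_adjoint_sub_proj_fixedSpace U V).norm_pow hn₀,
    norm_drOperator_mul_adjoint_sub_proj_fixedSpace, pow_mul]
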